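/- Let G be a Frobenius group whose kernel N is elementary abelian of order p² and whose complement C has prime order q, where p is prime. If q does not divide p - 1, then D(G) = (p+1)/q + 1. If q divides p - 1, then either D(G) = p + 2 (and this always holds when q = 2) or D(G) = (p-1)/q + 3. -/

import Mathlib

open Pointwise

/-- Two subgroups of `G` are conjugate. -/
def SubgroupConj {G : Type*} [Group G] (H K : Subgroup G) : Prop :=
  ∃ g : G, K = H.map (MulAut.conj g).toMonoidHom

/-- `D(G)`: the number of conjugacy classes of nontrivial subgroups of `G`
that are not self-normalizing. -/
noncomputable def DCount (G : Type*) [Group G] : ℕ :=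
  Nat.card (Quot fun (H K : {H : Subgroup G // H ≠ ⊥ ∧ Subgroup.normalizer (H : Set G) ≠ H}) =>
    SubgroupConj H.1 K.1)

/-- `D_G(N)`: the number of `G`-conjugacy classes of nontrivial, non self-normalizing
subgroups of `G` that are properly contained in `N`. -/
noncomputable def DCountIn (G : Type*) [Group G] (N : Subgroup G) : ℕ :=
  Nat.card (Quot fun (H K : {H : Subgroup G // H ≠ ⊥ ∧ Subgroup.normalizer (H : Set G) ≠ H ∧ H < N}) =>
    SubgroupConj H.1 K.1)

/-- `G` is a Frobenius group with kernel `N` and complement `H`. -/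
def IsFrobeniusWith {G : Type*} [Group G] (N H : Subgroup G) : Prop :=
  H ≠ ⊥ ∧ H ≠ ⊤ ∧
    (∀ g : G, g ∉ H → H ⊓ H.map (MulAut.conj g).toMonoidHom = ⊥) ∧
    (∀ x : G, x ∈ N ↔ ∀ g : G, g * x * g⁻¹ ∈ H → x = 1)

/-- A subgroup is elementary abelian for the prime `p`. -/
def IsElementaryAbelianSubgroup {G : Type*} [Group G] (p : ℕ) (N : Subgroup G) : Prop :=
  (∀ x ∈ N, x ^ p = 1) ∧ ∀ x ∈ N, ∀ y ∈ N, x * y = y * x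

/-- The derived length of a group: the least `n` with `derivedSeries G n = ⊥`. -/
noncomputable def derivedLength (G : Type*) [Group G] : ℕ :=
  sInf {n | derivedSeries G n = ⊥}

/-- The nilpotency class of a group: the least `n` with `lowerCentralSeries G n = ⊥`. -/
noncomputable def nilClass (G : Type*) [Group G] : ℕ :=
  sInf {n | Subgroup.lowerCentralSeries (⊤ : Subgroup G) n = ⊥}

set_option linter.unusedSectionVars false
set_option linter.unnecessarySimpa false
set_option linter.unusedVariables false

namespace Frob

variable {G : Type*} [Group G]

/-- conjugate subgroup -/
abbrev cj (g : G) (H : Subgroup G) : Subgroup G := H.map (MulAut.conj g).toMonoidHom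

lemma mem_cj {g a : G} {H : Subgroup G} : a ∈ cj g H ↔ g⁻¹ * a * g ∈ H := by
  simp only [cj, Subgroup.mem_map, MulEquiv.coe_toMonoidHom, MulAut.conj_apply]
  constructor
  · rintro ⟨x, hx, rfl⟩; simpa [mul_assoc] using hx
  · intro h; exact ⟨g⁻¹ * a * g, h, by group⟩

lemma cj_cj (g h : G) (H : Subgroup G) : cj g (cj h H) = cj (g * h) H := by
  ext a
  simp only [mem_cj, mul_inv_rev, ← mul_assoc]

lemma cj_one (H : Subgroup G) : cj 1 H = H := by
  ext a; simp [mem_cj]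

lemma card_cj (g : G) (H : Subgroup G) : Nat.card (cj g H) = Nat.card H :=
  (Nat.card_congr ((MulAut.conj g).subgroupMap H).toEquiv).symm

lemma mem_cj_of_mem {g a : G} {H : Subgroup G} (ha : a ∈ H) : g * a * g⁻¹ ∈ cj g H := by
  rw [mem_cj]; convert ha using 1; group

lemma conj_eq_one {g a : G} (h : g * a * g⁻¹ = 1) : a = 1 := by
  have := congrArg (fun z => g⁻¹ * z * g) h
  simpa [mul_assoc] using this

section Frobassume

variable {N C : Subgroup G}

lemma not_kernel_iff (hfrob : IsFrobeniusWith N C) (x : G) :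
    x ∉ N ↔ ∃ g, g * x * g⁻¹ ∈ C ∧ x ≠ 1 := by
  rw [hfrob.2.2.2 x]; push_neg; rfl

lemma kernel_normal (hfrob : IsFrobeniusWith N C) : N.Normal := by
  constructor
  intro x hx g
  rw [hfrob.2.2.2] at hx ⊢
  intro h hh
  have := hx (h * g) (by convert hh using 1; group)
  simp [this]

lemma kernel_inter (hfrob : IsFrobeniusWith N C) (x : G) (hx : x ∈ N) (hxc : x ∈ C) :
    x = 1 :=
  (hfrob.2.2.2 x).mp hx 1 (by simpa)

lemma malnormal (hfrob : IsFrobeniusWith N C) {g a : G} (ha : a ∈ C)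
    (hga : g * a * g⁻¹ ∈ C) (ha1 : a ≠ 1) : g ∈ C := by
  by_contra hg
  have h1 : g * a * g⁻¹ ∈ C ⊓ cj g C := ⟨hga, mem_cj_of_mem ha⟩
  rw [hfrob.2.2.1 g hg] at h1
  have h2 : g * a * g⁻¹ = 1 := by simpa using h1
  exact ha1 (conj_eq_one h2)

lemma fpf_core (hfrob : IsFrobeniusWith N C) {u a : G} (hu : u ∈ N) (ha : a ∈ C)
    (h : a * u * a⁻¹ = u) : a = 1 ∨ u = 1 := by
  by_cases ha1 : a = 1
  · exact Or.inl ha1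
  right
  have hmul : a * u = u * a := by
    calc a * u = (a * u * a⁻¹) * a := by group
      _ = u * a := by rw [h]
  have h2 : u⁻¹ * a * u⁻¹⁻¹ = a := by
    rw [inv_inv]
    calc u⁻¹ * a * u = u⁻¹ * (a * u) := by group
      _ = u⁻¹ * (u * a) := by rw [hmul]
      _ = a := by group
  have hui : u⁻¹ ∈ C := malnormal hfrob ha (by rw [h2]; exact ha) ha1
  by_contra hu1
  exact hu1 (kernel_inter hfrob u hu (by simpa using C.inv_mem hui))

lemma fpf_outside (hfrob : IsFrobeniusWith N C) {x u : G} (hx : x ∉ N) (hu : u ∈ N)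
    (h : x * u * x⁻¹ = u) : u = 1 := by
  have hNn := kernel_normal hfrob
  obtain ⟨g, hgx, hx1⟩ := (not_kernel_iff hfrob x).mp hx
  have ha1 : g * x * g⁻¹ ≠ 1 := fun h1 => hx1 (conj_eq_one h1)
  have hv : g * u * g⁻¹ ∈ N := hNn.conj_mem u hu g
  have hcomm : (g * x * g⁻¹) * (g * u * g⁻¹) * (g * x * g⁻¹)⁻¹ = g * u * g⁻¹ := by
    have e : (g * x * g⁻¹) * (g * u * g⁻¹) * (g * x * g⁻¹)⁻¹ = g * (x * u * x⁻¹) * g⁻¹ := by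
      group
    rw [e, h]
  rcases fpf_core hfrob hv hgx hcomm with h1 | h1
  · exact absurd h1 ha1
  · exact conj_eq_one h1

end Frobassume
end Frob

set_option linter.unusedSectionVars false
namespace Frob
variable {G : Type*} [Group G] [Finite G] {N C : Subgroup G} {p q : ℕ}

lemma comm_of_prime_card (hq : q.Prime) (hCcard : Nat.card C = q) :
    ∀ a ∈ C, ∀ b ∈ C, a * b = b * a := by
  haveI : Fact q.Prime := ⟨hq⟩
  haveI : IsCyclic ↥C := isCyclic_of_prime_card hCcard
  letI : CommGroup ↥C := IsCyclic.commGroup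
  intro a ha b hb
  exact congrArg Subtype.val (mul_comm (⟨a, ha⟩ : ↥C) ⟨b, hb⟩)

lemma card_G (hfrob : IsFrobeniusWith N C) (hq : q.Prime)
    (hNcard : Nat.card N = p ^ 2) (hCcard : Nat.card C = q) :
    Nat.card G = p ^ 2 * q := by
  classical
  have hcomm := comm_of_prime_card hq hCcard
  let f : (G ⧸ C) × {c : G // c ∈ C ∧ c ≠ 1} → {x : G // x ∉ N} := fun y =>
    Quotient.liftOn' y.1
      (fun g => (⟨g * y.2.1 * g⁻¹, by
        rw [not_kernel_iff hfrob]
        exact ⟨g⁻¹, by simpa [mul_assoc] using y.2.2.1,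
          fun h => y.2.2.2 (conj_eq_one h)⟩⟩ : {x : G // x ∉ N}))
      (by
        intro g g' hgg
        have hd : g⁻¹ * g' ∈ C := QuotientGroup.leftRel_apply.mp hgg
        apply Subtype.ext
        show g * y.2.1 * g⁻¹ = g' * y.2.1 * g'⁻¹
        have h1 : (g⁻¹ * g') * y.2.1 * (g⁻¹ * g')⁻¹ = y.2.1 := by
          have hc := hcomm _ hd _ y.2.2.1
          calc (g⁻¹ * g') * y.2.1 * (g⁻¹ * g')⁻¹
              = ((g⁻¹ * g') * y.2.1) * (g⁻¹ * g')⁻¹ := by group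
            _ = (y.2.1 * (g⁻¹ * g')) * (g⁻¹ * g')⁻¹ := by rw [hc]
            _ = y.2.1 := by group
        calc g * y.2.1 * g⁻¹ = g * ((g⁻¹ * g') * y.2.1 * (g⁻¹ * g')⁻¹) * g⁻¹ := by rw [h1]
          _ = g' * y.2.1 * g'⁻¹ := by group)
  have hinj : Function.Injective f := by
    rintro ⟨y1, c1, hc1, hc11⟩ ⟨y2, c2, hc2, hc22⟩ heq
    induction y1 using Quotient.inductionOn' with
    | h g1 =>
    induction y2 using Quotient.inductionOn' with
    | h g2 =>
    have hval : g1 * c1 * g1⁻¹ = g2 * c2 * g2⁻¹ := congrArg Subtype.val heq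
    have hkey : (g2⁻¹ * g1) * c1 * (g2⁻¹ * g1)⁻¹ = c2 := by
      calc (g2⁻¹ * g1) * c1 * (g2⁻¹ * g1)⁻¹ = g2⁻¹ * (g1 * c1 * g1⁻¹) * g2 := by group
        _ = g2⁻¹ * (g2 * c2 * g2⁻¹) * g2 := by rw [hval]
        _ = c2 := by group
    have hw : g2⁻¹ * g1 ∈ C := malnormal hfrob hc1 (hkey.symm ▸ hc2) hc11
    have hcoset : (Quotient.mk'' g1 : G ⧸ C) = Quotient.mk'' g2 := by
      apply Quotient.sound'
      exact QuotientGroup.leftRel_apply.mpr (by simpa using C.inv_mem hw)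
    have hfix : (g2⁻¹ * g1) * c1 * (g2⁻¹ * g1)⁻¹ = c1 := by
      have hc := hcomm _ hw _ hc1
      calc (g2⁻¹ * g1) * c1 * (g2⁻¹ * g1)⁻¹ = (c1 * (g2⁻¹ * g1)) * (g2⁻¹ * g1)⁻¹ := by
            rw [hc]
        _ = c1 := by group
    have hceq : c1 = c2 := by rw [← hkey, hfix]
    simp only [Prod.mk.injEq, Subtype.mk.injEq]
    exact ⟨hcoset, hceq.symm ▸ rfl⟩
  have hsurj : Function.Surjective f := by
    rintro ⟨x, hx⟩
    obtain ⟨g, hgC, hx1⟩ := (not_kernel_iff hfrob x).mp hx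
    refine ⟨⟨Quotient.mk'' g⁻¹, ⟨g * x * g⁻¹, hgC, fun h => hx1 (conj_eq_one h)⟩⟩, ?_⟩
    apply Subtype.ext
    show g⁻¹ * (g * x * g⁻¹) * g⁻¹⁻¹ = x
    group
  have hcard1 : Nat.card ((G ⧸ C) × {c : G // c ∈ C ∧ c ≠ 1}) = Nat.card {x : G // x ∉ N} :=
    Nat.card_congr (Equiv.ofBijective f ⟨hinj, hsurj⟩)
  -- cardinalities
  letI := Fintype.ofFinite G
  have heq1 : Nat.card {c : G // c ∈ C ∧ c ≠ 1} = q - 1 := by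
    have e : {c : G // c ∈ C ∧ c ≠ 1} ≃ {c : ↥C // ¬ c = 1} :=
      { toFun := fun c => ⟨⟨c.1, c.2.1⟩, fun h => c.2.2 (congrArg Subtype.val h)⟩
        invFun := fun c => ⟨c.1.1, c.1.2, fun h => c.2 (Subtype.ext h)⟩
        left_inv := fun c => rfl
        right_inv := fun c => rfl }
    rw [Nat.card_congr e]
    letI := Fintype.ofFinite ↥C
    have h1 : Fintype.card {c : ↥C // ¬ c = 1} = Fintype.card ↥C - 1 := by
      rw [Fintype.card_subtype_compl, Fintype.card_subtype_eq]
    rw [Nat.card_eq_fintype_card, h1, ← hCcard, Nat.card_eq_fintype_card]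
  have heq2 : Nat.card {x : G // x ∉ N} = Nat.card G - p ^ 2 := by
    show Nat.card {x : G // ¬ x ∈ N} = _
    have h2 : Fintype.card {x : G // ¬ x ∈ N} =
        Fintype.card G - Fintype.card {x : G // x ∈ N} := Fintype.card_subtype_compl _
    rw [Nat.card_eq_fintype_card, h2, ← Nat.card_eq_fintype_card (α := G)]
    congr 1
    rw [← Nat.card_eq_fintype_card]
    exact hNcard
  have hlag : Nat.card G = Nat.card (G ⧸ C) * q := by
    rw [Subgroup.card_eq_card_quotient_mul_card_subgroup C, hCcard]
  rw [Nat.card_prod, heq1, heq2] at hcard1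
  set m := Nat.card (G ⧸ C) with hm
  have hmul : m * (q - 1) = m * q - m := by rw [Nat.mul_sub, mul_one]
  have hple : p ^ 2 ≤ Nat.card G := by
    rw [← hNcard]
    exact Nat.le_of_dvd Nat.card_pos (Subgroup.card_subgroup_dvd_card N)
  have hmle : m ≤ m * q := Nat.le_mul_of_pos_right m hq.pos
  rw [hmul, hlag] at hcard1
  have hm2 : m = p ^ 2 := by omega
  rw [hlag, hm2]

lemma sup_N_eq_top (hfrob : IsFrobeniusWith N C) (hp : p.Prime) (hq : q.Prime)
    (hNcard : Nat.card N = p ^ 2) (hCcard : Nat.card C = q)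
    (H : Subgroup G) (hx : ∃ x ∈ H, x ∉ N) : N ⊔ H = ⊤ := by
  have hcardG := card_G hfrob hq hNcard hCcard
  have hd1 : p ^ 2 ∣ Nat.card ↥(N ⊔ H) := by
    rw [← hNcard]; exact Subgroup.card_dvd_of_le le_sup_left
  have hd2 : Nat.card ↥(N ⊔ H) ∣ p ^ 2 * q := by
    rw [← hcardG]; exact Subgroup.card_subgroup_dvd_card _
  obtain ⟨e, he⟩ := hd1
  have hedvd : e ∣ q := by
    have : p ^ 2 * e ∣ p ^ 2 * q := he ▸ hd2
    exact (mul_dvd_mul_iff_left (pow_ne_zero 2 hp.ne_zero)).mp this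
  rcases (Nat.Prime.eq_one_or_self_of_dvd hq e hedvd) with he1 | heq
  · exfalso
    have hcard : Nat.card ↥(N ⊔ H) ≤ Nat.card N := by
      rw [he, he1, mul_one, hNcard]
    have hNeq : N = N ⊔ H := Subgroup.eq_of_le_of_card_ge le_sup_left hcard
    obtain ⟨x, hxH, hxN⟩ := hx
    exact hxN (hNeq ▸ le_sup_right (α := Subgroup G) hxH :)
  · apply Subgroup.eq_top_of_card_eq
    rw [he, heq, hcardG]

end Frob

namespace Frob
variable {G : Type*} [Group G] [Finite G] {N C : Subgroup G} {p q : ℕ}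

lemma N_ne_top (hfrob : IsFrobeniusWith N C) : N ≠ ⊤ := by
  intro h
  rcases C.bot_or_exists_ne_one with hC | ⟨c, hc, hc1⟩
  · exact hfrob.1 hC
  · exact hc1 (kernel_inter hfrob c (h ▸ Subgroup.mem_top c) hc)

lemma N_le_normalizer (hNab : ∀ x ∈ N, ∀ y ∈ N, x * y = y * x)
    {H : Subgroup G} (hH : H ≤ N) : N ≤ Subgroup.normalizer (H : Set G) := by
  intro n hn
  rw [Subgroup.mem_normalizer_iff]
  intro h
  constructor
  · intro hh
    have : n * h * n⁻¹ = h := by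
      have hc := hNab n hn h (hH hh)
      calc n * h * n⁻¹ = (n * h) * n⁻¹ := by group
        _ = (h * n) * n⁻¹ := by rw [hc]
        _ = h := by group
    rw [this]; exact hh
  · intro hh
    have hhN : n * h * n⁻¹ ∈ N := hH hh
    have : n * h * n⁻¹ = h := by
      have hc : n * (h * n⁻¹) = (h * n⁻¹) * n := by
        have h2 : h * n⁻¹ ∈ N := by
          have : h = n⁻¹ * (n * h * n⁻¹) * n := by group
          have hhN2 : h ∈ N := by
            rw [this]
            exact N.mul_mem (N.mul_mem (N.inv_mem hn) hhN) hn
          exact N.mul_mem hhN2 (N.inv_mem hn)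
        exact hNab n hn _ h2
      calc n * h * n⁻¹ = n * (h * n⁻¹) := by group
        _ = (h * n⁻¹) * n := hc
        _ = h := by group
    rw [← this]; exact hh

/-- A nontrivial subgroup not contained in `N` is self-normalizing. -/
lemma self_norm_of_not_le (hfrob : IsFrobeniusWith N C) (hp : p.Prime) (hq : q.Prime)
    (hNcard : Nat.card N = p ^ 2) (hCcard : Nat.card C = q)
    {H : Subgroup G} (hnle : ¬ H ≤ N) : Subgroup.normalizer (H : Set G) = H := by
  haveI hNn := kernel_normal hfrob
  obtain ⟨x, hxH, hxN⟩ := SetLike.not_le_iff_exists.mp hnle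
  have htop : N ⊔ H = ⊤ := sup_N_eq_top hfrob hp hq hNcard hCcard H ⟨x, hxH, hxN⟩
  refine le_antisymm ?_ (Subgroup.le_normalizer (H := H))
  intro g hg
  -- decompose g = n * h
  have hgmem : g ∈ (↑(N ⊔ H) : Set G) := by rw [htop]; trivial
  rw [Subgroup.normal_mul] at hgmem
  obtain ⟨n, hn, h, hh, rfl⟩ := hgmem
  have hnnorm : n ∈ Subgroup.normalizer (H : Set G) := by
    have : n = (n * h) * h⁻¹ := by group
    rw [this]
    exact (Subgroup.normalizer (H : Set G)).mul_mem hg ((Subgroup.normalizer (H : Set G)).inv_mem (Subgroup.le_normalizer (H := H) hh))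
  suffices hnH : n ∈ H by exact H.mul_mem hnH hh
  -- the map ψ k = x⁻¹ k x * k⁻¹ on K = H ⊓ N is bijective
  set K := H ⊓ N with hK
  have hxiN : x⁻¹ ∉ N := fun hc => hxN (by simpa using N.inv_mem hc)
  have hψmem : ∀ k ∈ K, x⁻¹ * k * x * k⁻¹ ∈ K := by
    rintro k ⟨hk1, hk2⟩
    constructor
    · have h1 : x⁻¹ * k * x ∈ H := H.mul_mem (H.mul_mem (H.inv_mem hxH) hk1) hxH
      exact H.mul_mem h1 (H.inv_mem hk1)
    · have h1 : x⁻¹ * k * x ∈ N := by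
        have := hNn.conj_mem k hk2 x⁻¹
        simpa using this
      exact N.mul_mem h1 (N.inv_mem hk2)
  let ψ : ↥K → ↥K := fun k => ⟨x⁻¹ * k * x * k⁻¹, hψmem k k.2⟩
  have hcancel : ∀ k1 k2 : G, x⁻¹ * k1 * x * k1⁻¹ = x⁻¹ * k2 * x * k2⁻¹ →
      x⁻¹ * (k2⁻¹ * k1) * x = k2⁻¹ * k1 := by
    intro k1 k2 hE
    have : (x⁻¹ * k2 * x)⁻¹ * (x⁻¹ * k1 * x) = k2⁻¹ * k1 := by
      calc (x⁻¹ * k2 * x)⁻¹ * (x⁻¹ * k1 * x)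
          = (x⁻¹ * k2 * x)⁻¹ * (x⁻¹ * k1 * x * k1⁻¹) * k1 := by group
        _ = (x⁻¹ * k2 * x)⁻¹ * (x⁻¹ * k2 * x * k2⁻¹) * k1 := by rw [hE]
        _ = k2⁻¹ * k1 := by group
    calc x⁻¹ * (k2⁻¹ * k1) * x = (x⁻¹ * k2 * x)⁻¹ * (x⁻¹ * k1 * x) := by group
      _ = k2⁻¹ * k1 := this
  have hψinj : Function.Injective ψ := by
    rintro ⟨k1, hk1⟩ ⟨k2, hk2⟩ heq
    have hE : x⁻¹ * k1 * x * k1⁻¹ = x⁻¹ * k2 * x * k2⁻¹ := congrArg Subtype.val heq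
    have hu : k2⁻¹ * k1 ∈ N := N.mul_mem (N.inv_mem hk2.2) hk1.2
    have h1 : k2⁻¹ * k1 = 1 := by
      apply fpf_outside hfrob hxiN hu
      rw [inv_inv]
      exact hcancel k1 k2 hE
    apply Subtype.ext
    calc k1 = k2 * (k2⁻¹ * k1) := by group
      _ = k2 := by rw [h1, mul_one]
  have hψsurj : Function.Surjective ψ :=
    (Finite.injective_iff_surjective).mp hψinj
  -- n gives an element of K in the image
  have hwK : x⁻¹ * n * x * n⁻¹ ∈ K := by
    constructor
    · have h1 : n * x * n⁻¹ ∈ H := by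
        rw [Subgroup.mem_normalizer_iff] at hnnorm
        exact (hnnorm x).mp hxH
      have : x⁻¹ * n * x * n⁻¹ = x⁻¹ * (n * x * n⁻¹) := by group
      rw [this]
      exact H.mul_mem (H.inv_mem hxH) h1
    · have h1 : x⁻¹ * n * x ∈ N := by simpa using hNn.conj_mem n hn x⁻¹
      exact N.mul_mem h1 (N.inv_mem hn)
  obtain ⟨⟨k, hkK⟩, hk⟩ := hψsurj ⟨x⁻¹ * n * x * n⁻¹, hwK⟩
  have hE : x⁻¹ * k * x * k⁻¹ = x⁻¹ * n * x * n⁻¹ := congrArg Subtype.val hk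
  have hv : n⁻¹ * k ∈ N := N.mul_mem (N.inv_mem hn) hkK.2
  have h1 : n⁻¹ * k = 1 := by
    apply fpf_outside hfrob hxiN hv
    rw [inv_inv]
    exact hcancel k n hE
  rw [show n = k from inv_mul_eq_one.mp h1]
  exact hkK.1

lemma classify (hfrob : IsFrobeniusWith N C) (hp : p.Prime) (hq : q.Prime)
    (hNab : ∀ x ∈ N, ∀ y ∈ N, x * y = y * x)
    (hNcard : Nat.card N = p ^ 2) (hCcard : Nat.card C = q) (H : Subgroup G) :
    (H ≠ ⊥ ∧ Subgroup.normalizer (H : Set G) ≠ H) ↔ (H ≠ ⊥ ∧ H ≤ N) := by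
  haveI hNn := kernel_normal hfrob
  constructor
  · rintro ⟨h1, h2⟩
    refine ⟨h1, ?_⟩
    by_contra hnle
    exact h2 (self_norm_of_not_le hfrob hp hq hNcard hCcard hnle)
  · rintro ⟨h1, hle⟩
    refine ⟨h1, ?_⟩
    by_cases heq : H = N
    · subst heq
      rw [Subgroup.normalizer_eq_top_iff.mpr hNn]
      exact fun h => N_ne_top hfrob h.symm
    · intro hcontra
      have hlt : H < N := lt_of_le_of_ne hle heq
      have := N_le_normalizer hNab hle
      rw [hcontra] at this
      exact heq (le_antisymm hle this)

end Frob

namespace Frob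
variable {G : Type*} [Group G] [Finite G] {N C : Subgroup G} {p q : ℕ}

/-- predicate: L is a "line" -/
def IsLine (N : Subgroup G) (L : Subgroup G) : Prop := L ≠ ⊥ ∧ L < N

lemma line_card (hp : p.Prime) (hNcard : Nat.card N = p ^ 2) {L : Subgroup G}
    (hL : IsLine N L) : Nat.card L = p := by
  have hdvd : Nat.card L ∣ p ^ 2 := hNcard ▸ Subgroup.card_dvd_of_le hL.2.le
  obtain ⟨m, hm, hdm⟩ := (Nat.dvd_prime_pow hp).mp hdvd
  interval_cases m
  · exact absurd (Subgroup.card_eq_one.mp (by simpa using hdm)) hL.1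
  · simpa using hdm
  · exfalso
    have : L = N := Subgroup.eq_of_le_of_card_ge hL.2.le (by rw [hNcard, ← hdm])
    exact hL.2.ne this

lemma line_eq_zpowers (hp : p.Prime) (hNcard : Nat.card N = p ^ 2) {L : Subgroup G}
    (hL : IsLine N L) {x : G} (hx : x ∈ L) (hx1 : x ≠ 1) : Subgroup.zpowers x = L := by
  have hle : Subgroup.zpowers x ≤ L := Subgroup.zpowers_le.mpr hx
  have hcd : orderOf x ∣ p := by
    rw [← Nat.card_zpowers, ← line_card hp hNcard hL]
    exact Subgroup.card_dvd_of_le hle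
  rcases (Nat.Prime.eq_one_or_self_of_dvd hp _ hcd) with h1 | h1
  · exact absurd (orderOf_eq_one_iff.mp h1) hx1
  · exact Subgroup.eq_of_le_of_card_ge hle (by rw [Nat.card_zpowers, h1, line_card hp hNcard hL])

lemma lines_disjoint (hp : p.Prime) (hNcard : Nat.card N = p ^ 2) {L1 L2 : Subgroup G}
    (h1 : IsLine N L1) (h2 : IsLine N L2) (hne : L1 ≠ L2) : L1 ⊓ L2 = ⊥ := by
  have hdvd : Nat.card ↥(L1 ⊓ L2) ∣ p := by
    rw [← line_card hp hNcard h1]; exact Subgroup.card_dvd_of_le inf_le_left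
  rcases (Nat.Prime.eq_one_or_self_of_dvd hp _ hdvd) with h | h
  · exact Subgroup.card_eq_one.mp h
  · exfalso
    have e1 : L1 ⊓ L2 = L1 :=
      Subgroup.eq_of_le_of_card_ge (inf_le_left : L1 ⊓ L2 ≤ L1)
        (by rw [h, line_card hp hNcard h1])
    have hle : L1 ≤ L2 := by rw [← e1]; exact inf_le_right
    exact hne (Subgroup.eq_of_le_of_card_ge hle
      (by rw [line_card hp hNcard h1, line_card hp hNcard h2]))

lemma lines_sup (hp : p.Prime) (hNcard : Nat.card N = p ^ 2) {L1 L2 : Subgroup G}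
    (h1 : IsLine N L1) (h2 : IsLine N L2) (hne : L1 ≠ L2) : L1 ⊔ L2 = N := by
  have hles : L1 ⊔ L2 ≤ N := sup_le h1.2.le h2.2.le
  have hdvd : Nat.card ↥(L1 ⊔ L2) ∣ p ^ 2 := hNcard ▸ Subgroup.card_dvd_of_le hles
  obtain ⟨m, hm, hdm⟩ := (Nat.dvd_prime_pow hp).mp hdvd
  have hpd : p ∣ Nat.card ↥(L1 ⊔ L2) := by
    rw [← line_card hp hNcard h1]; exact Subgroup.card_dvd_of_le le_sup_left
  interval_cases m
  · exfalso
    rw [hdm, pow_zero] at hpd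
    exact hp.one_lt.ne' (Nat.dvd_one.mp hpd)
  · exfalso
    have e1 : L1 = L1 ⊔ L2 :=
      Subgroup.eq_of_le_of_card_ge le_sup_left (by rw [hdm, pow_one, line_card hp hNcard h1])
    have hle : L2 ≤ L1 := e1 ▸ le_sup_right
    exact hne (Subgroup.eq_of_le_of_card_ge hle
      (by rw [line_card hp hNcard h1, line_card hp hNcard h2])).symm
  · exact Subgroup.eq_of_le_of_card_ge hles (by rw [hNcard, ← hdm])

lemma mem_sup_decomp (hNab : ∀ x ∈ N, ∀ y ∈ N, x * y = y * x) {L1 L2 : Subgroup G}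
    (h1 : L1 ≤ N) (h2 : L2 ≤ N) {z : G} (hz : z ∈ L1 ⊔ L2) :
    ∃ x ∈ L1, ∃ y ∈ L2, z = x * y := by
  let P : Subgroup G :=
    { carrier := {w | ∃ x ∈ L1, ∃ y ∈ L2, w = x * y}
      one_mem' := ⟨1, L1.one_mem, 1, L2.one_mem, by simp⟩
      mul_mem' := by
        rintro a b ⟨x, hx, y, hy, rfl⟩ ⟨x', hx', y', hy', rfl⟩
        refine ⟨x * x', L1.mul_mem hx hx', y * y', L2.mul_mem hy hy', ?_⟩
        have hc : y * x' = x' * y := hNab y (h2 hy) x' (h1 hx')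
        calc x * y * (x' * y') = x * (y * x') * y' := by group
          _ = x * (x' * y) * y' := by rw [hc]
          _ = x * x' * (y * y') := by group
      inv_mem' := by
        rintro a ⟨x, hx, y, hy, rfl⟩
        refine ⟨x⁻¹, L1.inv_mem hx, y⁻¹, L2.inv_mem hy, ?_⟩
        have hc : x⁻¹ * y⁻¹ = y⁻¹ * x⁻¹ :=
          hNab x⁻¹ (N.inv_mem (h1 hx)) y⁻¹ (N.inv_mem (h2 hy))
        rw [mul_inv_rev, hc] }
  have hsle : L1 ⊔ L2 ≤ P := by
    apply sup_le
    · intro a ha; exact ⟨a, ha, 1, L2.one_mem, by simp⟩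
    · intro a ha; exact ⟨1, L1.one_mem, a, ha, by simp⟩
  exact hsle hz

lemma conj_zpow_aux (c x : G) (s : ℤ) : c * x ^ s * c⁻¹ = (c * x * c⁻¹) ^ s := by
  simpa [MulAut.conj_apply] using map_zpow (MulAut.conj c).toMonoidHom x s

lemma three_lines_invariant (hp : p.Prime) (hNab : ∀ x ∈ N, ∀ y ∈ N, x * y = y * x)
    (hNcard : Nat.card N = p ^ 2) (c : G) {L1 L2 L3 : Subgroup G}
    (h1 : IsLine N L1) (h2 : IsLine N L2) (h3 : IsLine N L3)
    (h12 : L1 ≠ L2) (h13 : L1 ≠ L3) (h23 : L2 ≠ L3)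
    (hc1 : cj c L1 = L1) (hc2 : cj c L2 = L2) (hc3 : cj c L3 = L3)
    {L : Subgroup G} (hL : IsLine N L) : cj c L = L := by
  letI : CommGroup ↥N :=
    { (inferInstance : Group ↥N) with
      mul_comm := fun a b => Subtype.ext (hNab a a.2 b b.2) }
  obtain ⟨z, hz3, hz1⟩ := L3.bot_or_exists_ne_one.resolve_left h3.1
  have hsup : L1 ⊔ L2 = N := lines_sup hp hNcard h1 h2 h12
  have hzN : z ∈ L1 ⊔ L2 := hsup ▸ h3.2.le hz3
  obtain ⟨x, hx1, y, hy2, rfl⟩ := mem_sup_decomp hNab h1.2.le h2.2.le hzN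
  have hxne : x ≠ 1 := by
    rintro rfl
    rw [one_mul] at hz1 hz3
    exact h23 ((line_eq_zpowers hp hNcard h2 hy2 hz1).symm.trans
      (line_eq_zpowers hp hNcard h3 hz3 hz1))
  have hyne : y ≠ 1 := by
    rintro rfl
    rw [mul_one] at hz1 hz3
    exact h13 ((line_eq_zpowers hp hNcard h1 hx1 hz1).symm.trans
      (line_eq_zpowers hp hNcard h3 hz3 hz1))
  have hL1 : Subgroup.zpowers x = L1 := line_eq_zpowers hp hNcard h1 hx1 hxne
  have hL2 : Subgroup.zpowers y = L2 := line_eq_zpowers hp hNcard h2 hy2 hyne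
  have hL3 : Subgroup.zpowers (x * y) = L3 := line_eq_zpowers hp hNcard h3 hz3 hz1
  have hcomm : Commute x y := hNab x (h1.2.le hx1) y (h2.2.le hy2)
  have hcx : c * x * c⁻¹ ∈ L1 := by rw [← hc1]; exact mem_cj_of_mem hx1
  have hcy : c * y * c⁻¹ ∈ L2 := by rw [← hc2]; exact mem_cj_of_mem hy2
  have hcz : c * (x * y) * c⁻¹ ∈ L3 := by rw [← hc3]; exact mem_cj_of_mem hz3
  rw [← hL1] at hcx
  rw [← hL2] at hcy
  rw [← hL3] at hcz
  obtain ⟨a, ha⟩ := Subgroup.mem_zpowers_iff.mp hcx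
  obtain ⟨b, hb⟩ := Subgroup.mem_zpowers_iff.mp hcy
  obtain ⟨m, hm⟩ := Subgroup.mem_zpowers_iff.mp hcz
  have hE : x ^ a * y ^ b = x ^ m * y ^ m := by
    have e1 : (c * x * c⁻¹) * (c * y * c⁻¹) = c * (x * y) * c⁻¹ := by group
    rw [← ha, ← hb, ← hm, hcomm.mul_zpow] at e1
    exact e1
  -- lift to ↥N
  have hxN : x ∈ N := h1.2.le hx1
  have hyN : y ∈ N := h2.2.le hy2
  set X : ↥N := ⟨x, hxN⟩ with hXdef
  set Y : ↥N := ⟨y, hyN⟩ with hYdef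
  have hEN : X ^ a * Y ^ b = X ^ m * Y ^ m := by
    apply Subtype.ext
    push_cast
    exact hE
  have hkey : X ^ (a - m) = Y ^ (m - b) := by
    have h2 : X ^ a = X ^ m * Y ^ m * (Y ^ b)⁻¹ := by
      rw [← hEN]; group
    rw [zpow_sub, zpow_sub, h2]
    calc X ^ m * Y ^ m * (Y ^ b)⁻¹ * (X ^ m)⁻¹
        = X ^ m * (Y ^ m * (Y ^ b)⁻¹) * (X ^ m)⁻¹ := by rw [mul_assoc (X ^ m)]
      _ = (Y ^ m * (Y ^ b)⁻¹) * X ^ m * (X ^ m)⁻¹ := by rw [mul_comm (X ^ m)]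
      _ = Y ^ m * (Y ^ b)⁻¹ := by group
  have hdisj := lines_disjoint hp hNcard h1 h2 h12
  have hbotmem : x ^ (a - m) ∈ L1 ⊓ L2 := by
    constructor
    · exact hL1 ▸ Subgroup.zpow_mem _ (Subgroup.mem_zpowers x) _
    · have : (X ^ (a - m) : G) = (Y ^ (m - b) : G) := congrArg Subtype.val hkey
      push_cast at this
      rw [this]
      exact hL2 ▸ Subgroup.zpow_mem _ (Subgroup.mem_zpowers y) _
  rw [hdisj, Subgroup.mem_bot] at hbotmem
  have hxm : c * x * c⁻¹ = x ^ m := by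
    rw [← ha]
    have e5 : a - m + m = a := by ring
    have : x ^ a = x ^ (a - m) * x ^ m := by rw [← zpow_add, e5]
    rw [this, hbotmem, one_mul]
  have hybm : y ^ (m - b) = 1 := by
    have : (X ^ (a - m) : G) = (Y ^ (m - b) : G) := congrArg Subtype.val hkey
    push_cast at this
    rw [← this, hbotmem]
  have hym : c * y * c⁻¹ = y ^ m := by
    rw [← hb]
    have e6 : m - b + b = m := by ring
    have : y ^ m = y ^ (m - b) * y ^ b := by rw [← zpow_add, e6]
    rw [this, hybm, one_mul]
  -- now any line is invariant
  have hle : cj c L ≤ L := by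
    rintro w' ⟨w, hw, rfl⟩
    simp only [MulEquiv.coe_toMonoidHom, MulAut.conj_apply]
    have hwN : w ∈ L1 ⊔ L2 := hsup ▸ hL.2.le hw
    obtain ⟨u, hu, v, hv, rfl⟩ := mem_sup_decomp hNab h1.2.le h2.2.le hwN
    obtain ⟨s, hs⟩ := Subgroup.mem_zpowers_iff.mp (hL1 ▸ hu : u ∈ Subgroup.zpowers x)
    obtain ⟨t, ht⟩ := Subgroup.mem_zpowers_iff.mp (hL2 ▸ hv : v ∈ Subgroup.zpowers y)
    have hcw : c * (u * v) * c⁻¹ = (u * v) ^ m := by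
      have e2 : c * (u * v) * c⁻¹ = (c * u * c⁻¹) * (c * v * c⁻¹) := by group
      have e3 : c * u * c⁻¹ = u ^ m := by
        rw [← hs, conj_zpow_aux, hxm, ← zpow_mul, ← zpow_mul, mul_comm]
      have e4 : c * v * c⁻¹ = v ^ m := by
        rw [← ht, conj_zpow_aux, hym, ← zpow_mul, ← zpow_mul, mul_comm]
      have hcuv : Commute u v := by
        rw [← hs, ← ht]
        exact (hcomm.zpow_zpow s t)
      rw [e2, e3, e4, ← hcuv.mul_zpow]
    rw [hcw]
    exact Subgroup.zpow_mem L hw m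
  exact Subgroup.eq_of_le_of_card_ge hle (by rw [card_cj])

end Frob

namespace Frob

open MulAction

section Counting
variable {Γ X : Type*} [Group Γ] [Finite Γ] [Finite X] [MulAction Γ X]

lemma orbit_card_dvd (x : X) : Nat.card (orbit Γ x) ∣ Nat.card Γ := by
  rw [Nat.card_congr (orbitEquivQuotientStabilizer Γ x)]
  exact Subgroup.card_quotient_dvd_card _

lemma orbit_card_one_iff (x : X) :
    Nat.card (orbit Γ x) = 1 ↔ ∀ c : Γ, c • x = x := by
  constructor
  · intro h c
    haveI : Subsingleton (orbit Γ x) := by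
      rcases Nat.card_eq_one_iff_unique.mp h with ⟨hs, _⟩
      exact hs
    have := @Subsingleton.elim (orbit Γ x) _ ⟨c • x, mem_orbit x c⟩ ⟨x, mem_orbit_self x⟩
    exact congrArg Subtype.val this
  · intro h
    have : orbit Γ x = {x} := by
      apply Set.eq_singleton_iff_unique_mem.mpr
      refine ⟨mem_orbit_self x, ?_⟩
      rintro y ⟨c, rfl⟩
      exact h c
    rw [this]
    simp

lemma orbit_count_prime (hq : (Nat.card Γ).Prime) :
    Nat.card X + (Nat.card Γ - 1) *
      Nat.card {ω : orbitRel.Quotient Γ X // Nat.card ω.orbit = 1}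
      = Nat.card Γ * Nat.card (orbitRel.Quotient Γ X) := by
  classical
  letI := Fintype.ofFinite X
  letI := Fintype.ofFinite (orbitRel.Quotient Γ X)
  set Ω := orbitRel.Quotient Γ X
  have hXcard : Nat.card X = ∑ ω : Ω, Nat.card ω.orbit := by
    rw [Nat.card_congr (selfEquivSigmaOrbits' Γ X), Nat.card_eq_fintype_card,
      Fintype.card_sigma]
    congr 1
    ext ω
    rw [Nat.card_eq_fintype_card]
  have horb : ∀ ω : Ω, Nat.card ω.orbit = 1 ∨ Nat.card ω.orbit = Nat.card Γ := by
    intro ω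
    have := orbitRel.Quotient.orbit_eq_orbit_out ω Quotient.out_eq'
    rw [this]
    exact hq.eq_one_or_self_of_dvd _ (orbit_card_dvd _)
  set S := Finset.univ.filter (fun ω : Ω => Nat.card ω.orbit = 1) with hS
  have hsum : ∑ ω : Ω, Nat.card ω.orbit
      = ∑ ω ∈ S, Nat.card ω.orbit + ∑ ω ∈ Finset.univ.filter
        (fun ω : Ω => ¬ Nat.card ω.orbit = 1), Nat.card ω.orbit :=
    (Finset.sum_filter_add_sum_filter_not _ _ _).symm
  have hsum1 : ∑ ω ∈ S, Nat.card ω.orbit = S.card := by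
    rw [Finset.sum_congr rfl (fun ω hω => (Finset.mem_filter.mp hω).2), Finset.sum_const,
      smul_eq_mul, mul_one]
  set T := Finset.univ.filter (fun ω : Ω => ¬ Nat.card ω.orbit = 1) with hT
  have hsum2 : ∑ ω ∈ T, Nat.card ω.orbit = Nat.card Γ * T.card := by
    rw [Finset.sum_congr rfl (fun ω hω => ((horb ω).resolve_left (Finset.mem_filter.mp hω).2)),
      Finset.sum_const, smul_eq_mul, mul_comm]
  have hf : Nat.card {ω : Ω // Nat.card ω.orbit = 1} = S.card := by
    have e : {ω : Ω // Nat.card ω.orbit = 1} ≃ {ω : Ω // ω ∈ S} :=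
      Equiv.subtypeEquivRight (by intro ω; rw [hS]; simp)
    rw [Nat.card_congr e]
    exact Nat.card_eq_finsetCard S
  have hk : S.card + T.card = Fintype.card Ω :=
    Finset.card_filter_add_card_filter_not _
  have hΩ : Nat.card Ω = Fintype.card Ω := Nat.card_eq_fintype_card
  rw [hXcard, hsum, hsum1, hsum2, hf, hΩ, ← hk]
  have h1 : 1 ≤ Nat.card Γ := hq.pos
  have e1 : (Nat.card Γ - 1) * S.card = Nat.card Γ * S.card - S.card := by
    rw [Nat.sub_mul, one_mul]
  have e2 : S.card ≤ Nat.card Γ * S.card := Nat.le_mul_of_pos_left _ hq.pos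
  rw [e1, Nat.mul_add]
  omega

lemma card_dvd_of_free_action (hq : (Nat.card Γ).Prime)
    (hfree : ∀ (c : Γ) (x : X), c • x = x → c = 1) : Nat.card Γ ∣ Nat.card X := by
  have hmain := orbit_count_prime (X := X) hq
  have hempty : IsEmpty {ω : orbitRel.Quotient Γ X // Nat.card ω.orbit = 1} := by
    constructor
    rintro ⟨ω, hω⟩
    rw [orbitRel.Quotient.orbit_eq_orbit_out ω Quotient.out_eq'] at hω
    have hfix := (orbit_card_one_iff _).mp hω
    have : ∀ c : Γ, c = 1 := fun c => hfree c _ (hfix c)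
    haveI : Subsingleton Γ := ⟨fun a b => by rw [this a, this b]⟩
    have : Nat.card Γ = 1 := Nat.card_eq_one_iff_unique.mpr ⟨inferInstance, ⟨1⟩⟩
    exact hq.one_lt.ne' this
  have h0 : Nat.card {ω : orbitRel.Quotient Γ X // Nat.card ω.orbit = 1} = 0 :=
    @Nat.card_of_isEmpty _ hempty
  rw [h0, mul_zero, add_zero] at hmain
  exact Dvd.intro _ hmain.symm

end Counting
end Frob

namespace Frob
variable {G : Type*} [Group G] [Finite G] {N C : Subgroup G} {p q : ℕ}

/-- Conjugation action of a subgroup on a conjugation-stable subtype of `G`. -/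
def conjSubAction (C : Subgroup G) (P : G → Prop)
    (hP : ∀ (c : ↥C) (x : G), P x → P (c * x * c⁻¹)) : MulAction ↥C {x : G // P x} where
  smul c x := ⟨c * x * c⁻¹, hP c x x.2⟩
  one_smul x := Subtype.ext (by
    show ((1 : ↥C) : G) * x.1 * ((1 : ↥C) : G)⁻¹ = x.1
    simp)
  mul_smul c d x := Subtype.ext (by
    show ((c * d : ↥C) : G) * x * ((c * d : ↥C) : G)⁻¹ = (c : G) * ((d : G) * x * (d : G)⁻¹) * (c : G)⁻¹
    push_cast
    group)

lemma card_nontriv (K : Subgroup G) :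
    Nat.card {x : G // x ∈ K ∧ x ≠ 1} = Nat.card K - 1 := by
  classical
  have e : {x : G // x ∈ K ∧ x ≠ 1} ≃ {y : ↥K // ¬ y = 1} :=
    { toFun := fun x => ⟨⟨x.1, x.2.1⟩, fun h => x.2.2 (congrArg Subtype.val h)⟩
      invFun := fun y => ⟨y.1.1, y.1.2, fun h => y.2 (Subtype.ext h)⟩
      left_inv := fun x => rfl
      right_inv := fun y => rfl }
  letI := Fintype.ofFinite ↥K
  have h1 : Fintype.card {y : ↥K // ¬ y = 1} = Fintype.card ↥K - 1 := by
    rw [Fintype.card_subtype_compl, Fintype.card_subtype_eq]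
  rw [Nat.card_congr e, Nat.card_eq_fintype_card, h1, ← Nat.card_eq_fintype_card]

lemma dvd_of_invariant_line (hfrob : IsFrobeniusWith N C) (hp : p.Prime) (hq : q.Prime)
    (hNcard : Nat.card N = p ^ 2) (hCcard : Nat.card C = q)
    {L : Subgroup G} (hL : IsLine N L) (hinv : ∀ c ∈ C, cj c L = L) : q ∣ p - 1 := by
  have hstable : ∀ (c : ↥C) (x : G), (x ∈ L ∧ x ≠ 1) →
      ((c : G) * x * (c : G)⁻¹ ∈ L ∧ (c : G) * x * (c : G)⁻¹ ≠ 1) := by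
    rintro c x ⟨hxL, hx1⟩
    constructor
    · rw [← hinv c c.2]; exact mem_cj_of_mem hxL
    · intro h; exact hx1 (conj_eq_one h)
  letI := conjSubAction C (fun x => x ∈ L ∧ x ≠ 1) hstable
  have hqprime : (Nat.card ↥C).Prime := hCcard ▸ hq
  have hfree : ∀ (c : ↥C) (x : {x : G // x ∈ L ∧ x ≠ 1}), c • x = x → c = 1 := by
    rintro c ⟨x, hxL, hx1⟩ hcx
    have hval : (c : G) * x * (c : G)⁻¹ = x := congrArg Subtype.val hcx
    rcases fpf_core hfrob (hL.2.le hxL) c.2 hval with h | h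
    · exact Subtype.ext h
    · exact absurd h hx1
  have := card_dvd_of_free_action hqprime hfree
  rwa [hCcard, card_nontriv, line_card hp hNcard hL] at this

lemma q2_inversion (hfrob : IsFrobeniusWith N C)
    (hNab : ∀ x ∈ N, ∀ y ∈ N, x * y = y * x) (hCcard : Nat.card C = 2)
    {c : G} (hc : c ∈ C) : ∀ g ∈ N, c * g * c⁻¹ = g⁻¹ ∨ c = 1 := by
  by_cases hc1 : c = 1
  · exact fun g _ => Or.inr hc1
  intro g hg
  left
  have hc2 : c * c = 1 := by
    have := pow_card_eq_one' (G := ↥C) (x := ⟨c, hc⟩)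
    rw [hCcard] at this
    have hval : (c : G) ^ 2 = 1 := congrArg Subtype.val this
    rwa [pow_two] at hval
  have hcinv : c⁻¹ = c := by
    rw [inv_eq_iff_mul_eq_one, hc2]
  have hcN : c ∉ N := fun h => hc1 (kernel_inter hfrob c h hc)
  -- θ u = u⁻¹ * (c u c⁻¹) is bijective on N
  have hθmem : ∀ u : ↥N, (u : G)⁻¹ * (c * u * c⁻¹) ∈ N := by
    intro u
    exact N.mul_mem (N.inv_mem u.2) ((kernel_normal hfrob).conj_mem u u.2 c)
  let θ : ↥N → ↥N := fun u => ⟨(u : G)⁻¹ * (c * u * c⁻¹), hθmem u⟩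
  have hθinj : Function.Injective θ := by
    rintro ⟨u, hu⟩ ⟨v, hv⟩ heq
    have hE : u⁻¹ * (c * u * c⁻¹) = v⁻¹ * (c * v * c⁻¹) := congrArg Subtype.val heq
    have hkey : c * (v * u⁻¹) * c⁻¹ = v * u⁻¹ := by
      calc c * (v * u⁻¹) * c⁻¹ = (c * v * c⁻¹) * (c * u * c⁻¹)⁻¹ := by group
        _ = (v * (u⁻¹ * (c * u * c⁻¹))) * (c * u * c⁻¹)⁻¹ := by rw [hE]; group
        _ = v * u⁻¹ := by group
    have h2 : v * u⁻¹ = 1 := fpf_outside hfrob hcN (N.mul_mem hv (N.inv_mem hu)) hkey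
    exact Subtype.ext (mul_inv_eq_one.mp h2).symm
  have hθsurj : Function.Surjective θ := Finite.injective_iff_surjective.mp hθinj
  obtain ⟨⟨u, hu⟩, huv⟩ := hθsurj ⟨g, hg⟩
  have hgu : g = u⁻¹ * (c * u * c⁻¹) := (congrArg Subtype.val huv).symm
  rw [hgu, hcinv]
  have hr : (u⁻¹ * (c * u * c))⁻¹ = c⁻¹ * u⁻¹ * c⁻¹ * u := by group
  rw [hcinv] at hr
  rw [hr]
  calc c * (u⁻¹ * (c * u * c)) * c = c * u⁻¹ * c * u * (c * c) := by group
    _ = c * u⁻¹ * c * u := by rw [hc2, mul_one]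

lemma q2_all_invariant (hfrob : IsFrobeniusWith N C)
    (hp : p.Prime) (hNab : ∀ x ∈ N, ∀ y ∈ N, x * y = y * x)
    (hNcard : Nat.card N = p ^ 2) (hCcard : Nat.card C = 2)
    {L : Subgroup G} (hL : IsLine N L) : ∀ c ∈ C, cj c L = L := by
  intro c hc
  by_cases hc1 : c = 1
  · rw [hc1]; exact cj_one L
  have hinv := fun g hg => (q2_inversion hfrob hNab hCcard hc g hg).resolve_right hc1
  have hle : cj c L ≤ L := by
    rintro w' ⟨w, hw, rfl⟩
    simp only [MulEquiv.coe_toMonoidHom, MulAut.conj_apply]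
    rw [hinv w (hL.2.le hw)]
    exact L.inv_mem hw
  exact Subgroup.eq_of_le_of_card_ge hle (by rw [card_cj])

lemma card_lines (hp : p.Prime) (hNall : ∀ x ∈ N, x ^ p = 1)
    (hNcard : Nat.card N = p ^ 2) :
    Nat.card {L : Subgroup G // IsLine N L} = p + 1 := by
  classical
  have hline : ∀ x : {x : G // x ∈ N ∧ x ≠ 1}, IsLine N (Subgroup.zpowers x.1) := by
    rintro ⟨x, hxN, hx1⟩
    constructor
    · exact Subgroup.zpowers_ne_bot.mpr hx1
    · have hle : Subgroup.zpowers x ≤ N := Subgroup.zpowers_le.mpr hxN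
      refine lt_of_le_of_ne hle ?_
      intro heq
      have hord : orderOf x = p := by
        have hdvd : orderOf x ∣ p := orderOf_dvd_of_pow_eq_one (hNall x hxN)
        rcases hp.eq_one_or_self_of_dvd _ hdvd with h | h
        · exact absurd (orderOf_eq_one_iff.mp h) hx1
        · exact h
      have : Nat.card (Subgroup.zpowers x) = p := by rw [Nat.card_zpowers, hord]
      rw [heq, hNcard] at this
      have hp1 : p < p ^ 2 := by nlinarith [hp.two_le]
      omega
  let e : {x : G // x ∈ N ∧ x ≠ 1} ≃
      Σ L : {L : Subgroup G // IsLine N L}, {x : G // x ∈ L.1 ∧ x ≠ 1} :=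
    { toFun := fun x => ⟨⟨Subgroup.zpowers x.1, hline x⟩,
        ⟨x.1, Subgroup.mem_zpowers x.1, x.2.2⟩⟩
      invFun := fun y => ⟨y.2.1, y.1.2.2.le y.2.2.1, y.2.2.2⟩
      left_inv := fun x => rfl
      right_inv := by
        rintro ⟨⟨L, hL⟩, ⟨x, hxL, hx1⟩⟩
        have hzp : Subgroup.zpowers x = L := line_eq_zpowers hp hNcard hL hxL hx1
        refine Sigma.ext (Subtype.ext hzp) ?_
        refine (Subtype.heq_iff_coe_eq ?_).mpr rfl
        intro y
        dsimp only
        rw [hzp] }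
  have hcard := Nat.card_congr e
  rw [card_nontriv N, hNcard] at hcard
  letI := Fintype.ofFinite {L : Subgroup G // IsLine N L}
  letI : ∀ L : {L : Subgroup G // IsLine N L}, Fintype {x : G // x ∈ L.1 ∧ x ≠ 1} :=
    fun L => Fintype.ofFinite _
  have hsig : Nat.card (Σ L : {L : Subgroup G // IsLine N L}, {x : G // x ∈ L.1 ∧ x ≠ 1})
      = ∑ L : {L : Subgroup G // IsLine N L}, (p - 1) := by
    rw [Nat.card_eq_fintype_card, Fintype.card_sigma]
    apply Finset.sum_congr rfl
    intro L _
    rw [← Nat.card_eq_fintype_card, card_nontriv L.1, line_card hp hNcard L.2]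
  rw [hsig, Finset.sum_const, smul_eq_mul, Finset.card_univ, ← Nat.card_eq_fintype_card]
    at hcard
  have h2 : 2 ≤ p := hp.two_le
  have hprod : (p + 1) * (p - 1) = p ^ 2 - 1 := by
    obtain ⟨n, rfl⟩ : ∃ n, p = n + 1 := ⟨p - 1, by omega⟩
    simp only [Nat.add_sub_cancel]
    have h : (n + 1) ^ 2 = n * n + 2 * n + 1 := by ring
    rw [h, Nat.add_sub_cancel]
    ring
  have hfin : Nat.card {L : Subgroup G // IsLine N L} * (p - 1) = (p + 1) * (p - 1) := by
    rw [hprod]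
    exact hcard.symm
  exact Nat.eq_of_mul_eq_mul_right (by omega : 0 < p - 1) hfin

end Frob

namespace Frob
variable {G : Type*} [Group G] [Finite G] {N C : Subgroup G} {p q : ℕ}

lemma cj_eq_of_mem_normalizer {g : G} {M : Subgroup G} (hg : g ∈ Subgroup.normalizer (M : Set G)) :
    cj g M = M := by
  ext a
  rw [mem_cj]
  rw [Subgroup.mem_normalizer_iff] at hg
  have h2 := hg (g⁻¹ * a * g)
  have e : g * (g⁻¹ * a * g) * g⁻¹ = a := by group
  rw [e] at h2
  exact h2

lemma N_ne_bot (hp : p.Prime) (hNcard : Nat.card N = p ^ 2) : N ≠ ⊥ := by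
  intro h
  rw [h] at hNcard
  have : Nat.card (⊥ : Subgroup G) = 1 := Subgroup.card_bot
  rw [this] at hNcard
  have := hp.two_le
  nlinarith

lemma cj_line (hNn : N.Normal) (hp : p.Prime) (hNcard : Nat.card N = p ^ 2)
    {L : Subgroup G} (hL : IsLine N L) (c : G) : IsLine N (cj c L) := by
  constructor
  · intro h
    have h1 : Nat.card (cj c L) = 1 := by rw [h]; exact Subgroup.card_bot
    rw [card_cj, line_card hp hNcard hL] at h1
    exact hp.one_lt.ne' h1
  · have hle : cj c L ≤ N := by
      rintro a ⟨x, hx, rfl⟩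
      exact hNn.conj_mem x (hL.2.le hx) c
    refine lt_of_le_of_ne hle ?_
    intro heq
    have : Nat.card (cj c L) = p := by rw [card_cj]; exact line_card hp hNcard hL
    rw [heq, hNcard] at this
    have := hp.two_le
    nlinarith

/-- Conjugation action of `C` on the set of lines. -/
def lineAction (hNn : N.Normal) (hp : p.Prime) (hNcard : Nat.card N = p ^ 2) :
    MulAction ↥C {L : Subgroup G // IsLine N L} where
  smul c L := ⟨cj (c : G) L.1, cj_line hNn hp hNcard L.2 c⟩
  one_smul L := Subtype.ext (by
    show cj ((1 : ↥C) : G) L.1 = L.1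
    rw [OneMemClass.coe_one, cj_one])
  mul_smul c d L := Subtype.ext (by
    show cj ((c * d : ↥C) : G) L.1 = cj (c : G) (cj (d : G) L.1)
    rw [cj_cj, Subgroup.coe_mul])

lemma exists_three {α : Type*} [Finite α] (h : 3 ≤ Nat.card α) :
    ∃ a b c : α, a ≠ b ∧ a ≠ c ∧ b ≠ c := by
  classical
  letI := Fintype.ofFinite α
  rw [Nat.card_eq_fintype_card] at h
  have h0 : (Finset.univ : Finset α).Nonempty := by
    rw [← Finset.card_pos]; rw [Finset.card_univ]; omega
  obtain ⟨a, _⟩ := h0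
  have h1 : 1 < ((Finset.univ : Finset α).erase a).card := by
    rw [Finset.card_erase_of_mem (Finset.mem_univ a), Finset.card_univ]; omega
  obtain ⟨b, hb⟩ := Finset.card_pos.mp (by omega : 0 < ((Finset.univ : Finset α).erase a).card)
  obtain ⟨c, hc, hcb⟩ := Finset.exists_mem_ne h1 b
  refine ⟨a, b, c, ?_, ?_, fun e => hcb e.symm⟩
  · exact fun e => (Finset.mem_erase.mp hb).1 e.symm
  · exact fun e => (Finset.mem_erase.mp hc).1 e.symm

end Frob

namespace Frob
variable {G : Type*} [Group G] [Finite G] {N C : Subgroup G} {p q : ℕ}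

lemma cj_le_N (hNn : N.Normal) {H : Subgroup G} (hH : H ≤ N) (c : G) : cj c H ≤ N := by
  rintro a ⟨x, hx, rfl⟩
  exact hNn.conj_mem x (hH hx) c

lemma subgroupConj_iff_C (hfrob : IsFrobeniusWith N C) (hp : p.Prime) (hq : q.Prime)
    (hNab : ∀ x ∈ N, ∀ y ∈ N, x * y = y * x)
    (hNcard : Nat.card N = p ^ 2) (hCcard : Nat.card C = q)
    {H K : Subgroup G} (hHle : H ≤ N) :
    SubgroupConj H K ↔ ∃ c ∈ C, K = cj c H := by
  constructor
  · rintro ⟨g, rfl⟩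
    have hNn := kernel_normal hfrob
    obtain ⟨c0, hc0C, hc01⟩ := C.bot_or_exists_ne_one.resolve_left hfrob.1
    have hc0N : c0 ∉ N := fun h => hc01 (kernel_inter hfrob c0 h hc0C)
    have htop : N ⊔ C = ⊤ := sup_N_eq_top hfrob hp hq hNcard hCcard C ⟨c0, hc0C, hc0N⟩
    have hgmem : g ∈ (↑(N ⊔ C) : Set G) := by rw [htop]; trivial
    rw [Subgroup.normal_mul] at hgmem
    obtain ⟨n, hn, c, hc, rfl⟩ := hgmem
    refine ⟨c, hc, ?_⟩
    show cj (n * c) H = cj c H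
    rw [← cj_cj n c H]
    rw [cj_eq_of_mem_normalizer (N_le_normalizer hNab (cj_le_N hNn hHle c) hn)]
  · rintro ⟨c, hc, rfl⟩
    exact ⟨c, rfl⟩

lemma quot_split (hfrob : IsFrobeniusWith N C) (hp : p.Prime) (hq : q.Prime)
    (hNab : ∀ x ∈ N, ∀ y ∈ N, x * y = y * x)
    (hNcard : Nat.card N = p ^ 2) (hCcard : Nat.card C = q) :
    Nat.card (Quot fun (H K : {H : Subgroup G // H ≠ ⊥ ∧ Subgroup.normalizer (H : Set G) ≠ H}) =>
        SubgroupConj H.1 K.1)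
      = Nat.card (Quot fun (H K : {L : Subgroup G // IsLine N L}) =>
        SubgroupConj H.1 K.1) + 1 := by
  classical
  have hNn := kernel_normal hfrob
  have hclass := classify hfrob hp hq hNab hNcard hCcard
  set rT := fun (H K : {H : Subgroup G // H ≠ ⊥ ∧ Subgroup.normalizer (H : Set G) ≠ H}) =>
    SubgroupConj H.1 K.1 with hrT
  set rL := fun (H K : {L : Subgroup G // IsLine N L}) => SubgroupConj H.1 K.1 with hrL
  have hcjN : ∀ g : G, cj g N = N := fun g =>
    cj_eq_of_mem_normalizer (by rw [Subgroup.normalizer_eq_top_iff.mpr hNn]; trivial)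
  -- the forward map
  have hle : ∀ H : {H : Subgroup G // H ≠ ⊥ ∧ Subgroup.normalizer (H : Set G) ≠ H}, H.1 ≤ N :=
    fun H => ((hclass H.1).mp H.2).2
  let F : {H : Subgroup G // H ≠ ⊥ ∧ Subgroup.normalizer (H : Set G) ≠ H} → Quot rL ⊕ Unit := fun H =>
    if h : H.1 = N then Sum.inr Unit.unit
    else Sum.inl (Quot.mk rL ⟨H.1, H.2.1, lt_of_le_of_ne (hle H) h⟩)
  have hFresp : ∀ H K, rT H K → F H = F K := by
    rintro H K ⟨g, hg⟩
    by_cases h : H.1 = N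
    · have hK : K.1 = N := by rw [hg, h]; exact hcjN g
      simp only [F, dif_pos h, dif_pos hK]
    · have hK : K.1 ≠ N := by
        intro hKN
        apply h
        have : cj g⁻¹ K.1 = H.1 := by
          rw [hg]
          show cj g⁻¹ (cj g H.1) = H.1
          rw [cj_cj, inv_mul_cancel, cj_one]
        rw [← this, hKN, hcjN]
      simp only [F, dif_neg h, dif_neg hK]
      congr 1
      exact Quot.sound ⟨g, hg⟩
  let Fbar : Quot rT → Quot rL ⊕ Unit := Quot.lift F hFresp
  -- the backward map
  have hNmem : (N ≠ ⊥ ∧ Subgroup.normalizer (N : Set G) ≠ N) := (hclass N).mpr ⟨N_ne_bot hp hNcard, le_rfl⟩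
  let Gb : Quot rL ⊕ Unit → Quot rT := Sum.elim
    (Quot.lift (fun L => Quot.mk rT ⟨L.1, (hclass L.1).mpr ⟨L.2.1, L.2.2.le⟩⟩)
      (fun L L' h => Quot.sound h))
    (fun _ => Quot.mk rT ⟨N, hNmem⟩)
  have hleft : ∀ x, Gb (Fbar x) = x := by
    apply Quot.ind
    intro H
    by_cases h : H.1 = N
    · show Gb (F H) = _
      simp only [F, dif_pos h]
      show Quot.mk rT ⟨N, hNmem⟩ = Quot.mk rT H
      congr 1
      exact Subtype.ext h.symm
    · show Gb (F H) = _
      simp only [F, dif_neg h]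
      show Quot.mk rT ⟨H.1, _⟩ = Quot.mk rT H
      congr 1
  have hright : ∀ y, Fbar (Gb y) = y := by
    rintro (x | u)
    · induction x using Quot.ind with
      | _ L =>
        show F ⟨L.1, _⟩ = Sum.inl (Quot.mk rL L)
        have h : L.1 ≠ N := L.2.2.ne
        simp only [F, dif_neg h]
    · show F ⟨N, hNmem⟩ = Sum.inr u
      simp only [F, dif_pos rfl]
  have e : Quot rT ≃ Quot rL ⊕ Unit :=
    { toFun := Fbar, invFun := Gb, left_inv := hleft, right_inv := hright }
  rw [Nat.card_congr e, Nat.card_sum]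
  congr 1
  exact Nat.card_unique

end Frob

theorem stmt10 (G : Type*) [Group G] [Finite G] (N C : Subgroup G) (p q : ℕ)
    (hp : p.Prime) (hq : q.Prime) (hfrob : IsFrobeniusWith N C)
    (hN : IsElementaryAbelianSubgroup p N) (hNcard : Nat.card N = p ^ 2)
    (hCcard : Nat.card C = q) :
    (¬ q ∣ p - 1 → (DCount G : ℚ) = ((p : ℚ) + 1) / q + 1) ∧
      (q ∣ p - 1 →
        ((DCount G = p + 2 ∨ (DCount G : ℚ) = ((p : ℚ) - 1) / q + 3) ∧
          (q = 2 → DCount G = p + 2))) := by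
  classical
  obtain ⟨hNall, hNab⟩ := hN
  have hNn := Frob.kernel_normal hfrob
  set X := {L : Subgroup G // Frob.IsLine N L} with hX
  letI act : MulAction ↥C X := Frob.lineAction hNn hp hNcard
  set Ω := MulAction.orbitRel.Quotient ↥C X with hΩ
  set k := Nat.card Ω with hk
  set f := Nat.card {ω : Ω // Nat.card ω.orbit = 1} with hf
  have hsmul_val : ∀ (c : ↥C) (L : X), (c • L).1 = Frob.cj (c : G) L.1 := fun c L => by
    with_unfolding_all rfl
  -- relation identification
  have hrel : (fun (H K : X) => SubgroupConj H.1 K.1) = (MulAction.orbitRel ↥C X).r := by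
    funext H K
    apply propext
    rw [Frob.subgroupConj_iff_C hfrob hp hq hNab hNcard hCcard H.2.2.le]
    have hOR : (MulAction.orbitRel ↥C X).r H K ↔ ∃ c : ↥C, c • K = H :=
      Iff.trans Iff.rfl MulAction.mem_orbit_iff
    rw [hOR]
    constructor
    · rintro ⟨c, hc, hK⟩
      refine ⟨(⟨c, hc⟩ : ↥C)⁻¹, ?_⟩
      apply Subtype.ext
      rw [hsmul_val]
      show Frob.cj c⁻¹ K.1 = H.1
      rw [hK]
      show Frob.cj c⁻¹ (Frob.cj c H.1) = H.1
      rw [Frob.cj_cj, inv_mul_cancel, Frob.cj_one]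
    · rintro ⟨c, hc⟩
      refine ⟨((c⁻¹ : ↥C) : G), (c⁻¹ : ↥C).2, ?_⟩
      have hval : Frob.cj (c : G) K.1 = H.1 := by rw [← hsmul_val, hc]
      rw [← hval]
      show K.1 = Frob.cj ((c⁻¹ : ↥C) : G) (Frob.cj ((c : ↥C) : G) K.1)
      rw [Frob.cj_cj]
      rw [show ((c⁻¹ : ↥C) : G) * ((c : ↥C) : G) = ((c⁻¹ * c : ↥C) : G) from rfl]
      rw [inv_mul_cancel, OneMemClass.coe_one, Frob.cj_one]
  -- D = k + 1
  have hsplit := Frob.quot_split hfrob hp hq hNab hNcard hCcard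
  have hqq : Nat.card (Quot fun (H K : X) => SubgroupConj H.1 K.1) = k := by
    rw [hrel]
    rfl
  have hD : DCount G = k + 1 := by
    show Nat.card _ = k + 1
    rw [hsplit, hqq]
  -- master counting equation
  have hXcard : Nat.card X = p + 1 := Frob.card_lines hp hNall hNcard
  have hmaster0 := Frob.orbit_count_prime (Γ := ↥C) (X := X) (hCcard ▸ hq)
  rw [hCcard, hXcard] at hmaster0
  have hmaster : (p + 1) + (q - 1) * f = q * k := hmaster0
  clear hmaster0
  -- singleton classes give invariant lines
  have hinv_line : ∀ ω : Ω, Nat.card ω.orbit = 1 →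
      ∀ c ∈ C, Frob.cj c (ω.out).1 = (ω.out).1 := by
    intro ω hω c hc
    rw [MulAction.orbitRel.Quotient.orbit_eq_orbit_out ω Quotient.out_eq'] at hω
    have hfix := (Frob.orbit_card_one_iff (Γ := ↥C) ω.out).mp hω
    have := congrArg Subtype.val (hfix ⟨c, hc⟩)
    rwa [hsmul_val] at this
  -- all classes singleton when all lines invariant
  have hf_eq_k : (∀ (L : X) (c : ↥C), c • L = L) → f = k := by
    intro hall
    have hsingle : ∀ ω : Ω, Nat.card ω.orbit = 1 := by
      intro ω
      rw [MulAction.orbitRel.Quotient.orbit_eq_orbit_out ω Quotient.out_eq']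
      exact (Frob.orbit_card_one_iff _).mpr (fun c => hall ω.out c)
    rw [hf, hk]
    exact Nat.card_congr (Equiv.subtypeUnivEquiv hsingle)
  have hall_to_Dp2 : (∀ (L : X) (c : ↥C), c • L = L) → DCount G = p + 2 := by
    intro hall
    have hfk := hf_eq_k hall
    have e : (q - 1) * k + k = q * k := by
      have h1 : (q - 1) + 1 = q := by have := hq.one_lt; omega
      calc (q - 1) * k + k = ((q - 1) + 1) * k := by ring
        _ = q * k := by rw [h1]
    rw [hfk] at hmaster
    have hk1 : k = p + 1 := by
      set a := (q - 1) * k with ha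
      set b := q * k with hb
      omega
    rw [hD, hk1]
  -- q = 2 implies all lines invariant
  have hq2all : q = 2 → (∀ (L : X) (c : ↥C), c • L = L) := by
    intro h2 L c
    apply Subtype.ext
    rw [hsmul_val]
    exact Frob.q2_all_invariant hfrob hp hNab hNcard (by rw [hCcard, h2]) L.2 (c : G) c.2
  constructor
  · -- q does not divide p - 1
    intro hndvd
    have hf0 : f = 0 := by
      by_contra h
      have hpos : 0 < f := Nat.pos_of_ne_zero h
      obtain ⟨⟨ω, hω⟩⟩ := (Nat.card_pos_iff.mp hpos).1
      exact hndvd (Frob.dvd_of_invariant_line hfrob hp hq hNcard hCcard (ω.out).2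
        (hinv_line ω hω))
    rw [hf0, mul_zero, add_zero] at hmaster
    rw [hD]
    have hq0 : (q : ℚ) ≠ 0 := Nat.cast_ne_zero.mpr hq.pos.ne'
    have hcast : (p : ℚ) + 1 = (q : ℚ) * (k : ℚ) := by exact_mod_cast congrArg Nat.cast hmaster
    push_cast
    field_simp
    linarith [hcast]
  · -- q divides p - 1
    intro hdvd
    have hq1 : 1 < q := hq.one_lt
    have hp2 : 2 ≤ p := hp.two_le
    have hqlep : q ≤ p - 1 := Nat.le_of_dvd (by omega) hdvd
    have hf1 : 1 ≤ f := by
      by_contra h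
      have hf0 : f = 0 := by omega
      rw [hf0, mul_zero, add_zero] at hmaster
      have hq2 : q = 2 := by
        have hd1 : q ∣ p + 1 := ⟨k, hmaster⟩
        have hd2 : q ∣ 2 := by
          have e2 : p + 1 - (p - 1) = 2 := by omega
          rw [← e2]
          exact Nat.dvd_sub hd1 hdvd
        rcases (Nat.prime_two.eq_one_or_self_of_dvd q hd2) with h | h
        · omega
        · exact h
      have hfk := hf_eq_k (hq2all hq2)
      rw [← hfk, hf0, mul_zero] at hmaster
      omega
    have hfne1 : f ≠ 1 := by
      intro h1
      rw [h1, mul_one] at hmaster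
      have hqk : q * (k - 1) = p := by
        have e : q * (k - 1) = q * k - q := by rw [Nat.mul_sub, mul_one]
        rw [e]
        set b := q * k with hb
        omega
      have hqdvd : q ∣ p := ⟨k - 1, hqk.symm⟩
      rcases (hp.eq_one_or_self_of_dvd q hqdvd) with h | h
      · omega
      · omega
    rcases Nat.lt_or_ge f 3 with hf3 | hf3
    · -- f = 2
      have hf2 : f = 2 := by omega
      constructor
      · right
        rw [hf2] at hmaster
        rw [hD]
        have hcast : (p : ℚ) + 1 + ((q : ℚ) - 1) * 2 = (q : ℚ) * (k : ℚ) := by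
          have h := congrArg (Nat.cast (R := ℚ)) hmaster
          push_cast [Nat.cast_sub hq.one_le] at h
          linarith [h]
        have hq0 : (q : ℚ) ≠ 0 := Nat.cast_ne_zero.mpr hq.pos.ne'
        push_cast
        field_simp
        linarith [hcast]
      · intro h2
        exfalso
        have hfk := hf_eq_k (hq2all h2)
        rw [hf2] at hmaster hfk
        rw [← hfk, h2] at hmaster
        omega
    · -- f ≥ 3: all lines invariant
      have hall : ∀ (L : X) (c : ↥C), c • L = L := by
        obtain ⟨a, b, c0, hab, hac, hbc⟩ :=
          Frob.exists_three (α := {ω : Ω // Nat.card ω.orbit = 1}) hf3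
        set La := (a.1).out with hLa
        set Lb := (b.1).out with hLb
        set Lc := (c0.1).out with hLc
        have hdab : La ≠ Lb := fun h => hab (Subtype.ext (Quotient.out_inj.mp h))
        have hdac : La ≠ Lc := fun h => hac (Subtype.ext (Quotient.out_inj.mp h))
        have hdbc : Lb ≠ Lc := fun h => hbc (Subtype.ext (Quotient.out_inj.mp h))
        have hvab : La.1 ≠ Lb.1 := fun h => hdab (Subtype.ext h)
        have hvac : La.1 ≠ Lc.1 := fun h => hdac (Subtype.ext h)
        have hvbc : Lb.1 ≠ Lc.1 := fun h => hdbc (Subtype.ext h)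
        intro L c
        apply Subtype.ext
        rw [hsmul_val]
        exact Frob.three_lines_invariant hp hNab hNcard (c : G) La.2 Lb.2 Lc.2 hvab hvac hvbc
          (hinv_line a.1 a.2 c c.2) (hinv_line b.1 b.2 c c.2) (hinv_line c0.1 c0.2 c c.2) L.2
      exact ⟨Or.inl (hall_to_Dp2 hall), fun _ => hall_to_Dp2 hall⟩
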